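/- Let F be a p-dimensional probability distribution with continuous joint density (not necessarily compactly supported). For each coordinate i, let A_i be either {x_i − ⌊x_i⌋ ∈ G} or {x_i − ⌊x_i⌋ ∉ G}. Then as m → ∞, P_{x∼F}(∩_{i=1}^p A_i) → (1/2)^p; in particular, the events of each coordinate's fractional part falling in the green list are asymptotically independent. -/

import Mathlib

open MeasureTheory Set Filter

def greenInterval (m : ℕ) (b : Fin m → Bool) (k : Fin m) : Set ℝ :=
  Set.Icc ((2 * (k : ℝ) + (if b k then 1 else 0)) / (2 * m))
          ((2 * (k : ℝ) + (if b k then 1 else 0) + 1) / (2 * m))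

def greenSet (m : ℕ) (b : Fin m → Bool) : Set ℝ :=
  ⋃ k : Fin m, greenInterval m b k

/-!
For each coordinate `i`, the map `coordFlip m i` moves `x i` by `±1/(2m)` to the other cell of
its pair. It preserves Lebesgue measure, fixes the other coordinates and, off a null set, swaps
the events `fract (x i) ∈ G` and `fract (x i) ∉ G`. Hence imposing the condition on coordinate
`i` halves the probability up to an error `‖f ∘ coordFlip m i - f‖₁`, and peeling off the
coordinates one at a time gives `|P(⋂ A_i) - 2⁻ᵖ| ≤ ∑ᵢ ‖f ∘ coordFlip m i - f‖₁`. Each term tends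
to `0` because translation is continuous in `L¹` and the shifts `1/(2m)` tend to `0`.
-/

open Topology

theorem Int.floor_eq_iff_of_notMem_range {x : ℝ} (hx : x ∉ Set.range ((↑) : ℤ → ℝ)) (c : ℤ) :
    ⌊x⌋ = c ↔ (c : ℝ) ≤ x ∧ x ≤ c + 1 := by
  rw [Int.floor_eq_iff]
  refine and_congr_right fun _ => ⟨le_of_lt, fun h => h.lt_of_ne fun h' => hx ⟨c + 1, ?_⟩⟩
  push_cast
  exact h'.symm

section Translation

variable {E : Type*} [NormedAddCommGroup E] [NormedSpace ℝ E] [FiniteDimensional ℝ E]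
  [MeasurableSpace E] [BorelSpace E] {μ : Measure E} [μ.IsAddHaarMeasure]

theorem HasCompactSupport.tendsto_integral_abs_comp_add_sub {g : E → ℝ} (hgc : HasCompactSupport g)
    (hg : Continuous g) : Tendsto (fun w => ∫ x, |g (x + w) - g x| ∂μ) (𝓝 0) (𝓝 0) := by
  obtain ⟨C, hC⟩ := hg.bounded_above_of_compact_support hgc
  set K := Metric.cthickening 1 (tsupport g)
  have hK : IsCompact K := hgc.cthickening
  have hbound : ∀ᶠ w in 𝓝 (0 : E), ∀ᵐ x ∂μ,
      ‖|g (x + w) - g x|‖ ≤ K.indicator (fun _ => 2 * C) x := by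
    filter_upwards [Metric.closedBall_mem_nhds (0 : E) one_pos] with w hw
    refine ae_of_all _ fun x => ?_
    rw [Real.norm_eq_abs, abs_abs]
    by_cases hx : x ∈ K
    · rw [indicator_of_mem hx]
      have h₁ := hC (x + w)
      have h₂ := hC x
      rw [Real.norm_eq_abs] at h₁ h₂
      linarith [abs_sub (g (x + w)) (g x)]
    · have hxw : x + w ∉ tsupport g := fun h => hx <|
        Metric.mem_cthickening_of_dist_le x (x + w) 1 _ h (by simpa using hw)
      have hx' : x ∉ tsupport g := fun h => hx (Metric.self_subset_cthickening _ h)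
      simp [indicator_of_notMem hx, image_eq_zero_of_notMem_tsupport hxw,
        image_eq_zero_of_notMem_tsupport hx']
  have hlim : ∀ᵐ x ∂μ, Tendsto (fun w => |g (x + w) - g x|) (𝓝 0) (𝓝 0) := by
    refine ae_of_all _ fun x => ?_
    have := ((hg.comp (continuous_const_add x)).tendsto 0).sub_const (g x)
    simpa using this.abs
  simpa using tendsto_integral_filter_of_dominated_convergence _
    (Eventually.of_forall fun w =>
      ((hg.comp (continuous_add_const w)).sub hg).abs.aestronglyMeasurable)
    hbound ((integrableOn_const hK.measure_ne_top).integrable_indicator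
      Metric.isClosed_cthickening.measurableSet) hlim

theorem MeasureTheory.Integrable.tendsto_integral_abs_comp_add_sub {f : E → ℝ}
    (hf : Integrable f μ) : Tendsto (fun w => ∫ x, |f (x + w) - f x| ∂μ) (𝓝 0) (𝓝 0) := by
  refine tendsto_order.2 ⟨fun a ha => Eventually.of_forall fun w =>
    ha.trans_le (integral_nonneg fun x => abs_nonneg _), fun ε hε => ?_⟩
  obtain ⟨g, hgc, hfg, hg, hgi⟩ :=
    hf.exists_hasCompactSupport_integral_sub_le (ε := ε / 3) (by positivity)
  filter_upwards [(hgc.tendsto_integral_abs_comp_add_sub (μ := μ) hg).eventually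
    (gt_mem_nhds (show (0 : ℝ) < ε / 3 by positivity))] with w hw
  have hfg' : ∫ x, |f (x + w) - g (x + w)| ∂μ = ∫ x, |f x - g x| ∂μ :=
    integral_add_right_eq_self (fun x => |f x - g x|) w
  have hgf : ∫ x, |g x - f x| ∂μ = ∫ x, |f x - g x| ∂μ := by simp_rw [abs_sub_comm]
  have hi₁ : Integrable (fun x => |f (x + w) - g (x + w)|) μ :=
    ((hf.comp_add_right w).sub (hgi.comp_add_right w)).abs
  have hi₂ : Integrable (fun x => |g (x + w) - g x|) μ := ((hgi.comp_add_right w).sub hgi).abs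
  have hi₃ : Integrable (fun x => |g x - f x|) μ := (hgi.sub hf).abs
  have hi₁₂ : Integrable (fun x => |f (x + w) - g (x + w)| + |g (x + w) - g x|) μ := hi₁.add hi₂
  calc ∫ x, |f (x + w) - f x| ∂μ
      ≤ ∫ x, |f (x + w) - g (x + w)| + |g (x + w) - g x| + |g x - f x| ∂μ := by
        refine integral_mono_of_nonneg (ae_of_all _ fun x => abs_nonneg _)
          (hi₁₂.add hi₃) (ae_of_all _ fun x => ?_)
        dsimp only
        linarith [abs_sub_le (f (x + w)) (g (x + w)) (f x), abs_sub_le (g (x + w)) (g x) (f x)]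
    _ = 2 * ∫ x, |f x - g x| ∂μ + ∫ x, |g (x + w) - g x| ∂μ := by
        rw [integral_add hi₁₂ hi₃, integral_add hi₁ hi₂, hfg', hgf]; ring
    _ < ε := by simp only [Real.norm_eq_abs] at hfg; linarith

end Translation

theorem MeasureTheory.measurePreserving_piecewise_add_sub {G : Type*} [AddGroup G]
    [MeasurableSpace G] [MeasurableAdd G] (μ : Measure G) [μ.IsAddRightInvariant] {A : Set G}
    [DecidablePred (· ∈ A)] (hA : MeasurableSet A) {v : G} (hv : ∀ x, x + v ∈ A ↔ x ∉ A) :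
    MeasurePreserving (A.piecewise (· + v) (· - v)) μ μ := by
  have hsub : ∀ x, x - v ∈ A ↔ x ∉ A := fun x => by
    have := hv (x - v)
    rw [sub_add_cancel] at this
    tauto
  have hmeas : Measurable (A.piecewise (· + v) (· - v)) := by
    simpa only [sub_eq_add_neg] using
      (measurable_add_const v).piecewise hA (measurable_add_const (-v))
  refine ⟨hmeas, Measure.ext fun S hS => ?_⟩
  have h₁ : A.piecewise (· + v) (· - v) ⁻¹' S ∩ A = (· + v) ⁻¹' (S \ A) := by
    ext x; by_cases hx : x ∈ A <;> simp [hx, hv]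
  have h₂ : A.piecewise (· + v) (· - v) ⁻¹' S \ A = (· + -v) ⁻¹' (S ∩ A) := by
    ext x; by_cases hx : x ∈ A <;> simp [hx, hsub, ← sub_eq_add_neg]
  rw [Measure.map_apply hmeas hS, ← measure_inter_add_sdiff _ hA, h₁, h₂,
    measure_preimage_add_right, measure_preimage_add_right, add_comm, measure_inter_add_sdiff _ hA]

theorem integral_abs_comp_sub_le_of_forall_eq_add_or_eq_sub {G : Type*} [AddGroup G]
    [MeasurableSpace G] [MeasurableAdd G] {μ : Measure G} [μ.IsAddRightInvariant] {σ : G → G}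
    {v : G} (hσ : ∀ x, σ x = x + v ∨ σ x = x - v) {f : G → ℝ} (hf : Integrable f μ) :
    ∫ x, |f (σ x) - f x| ∂μ ≤ ∫ x, |f (x + v) - f x| ∂μ + ∫ x, |f (x - v) - f x| ∂μ := by
  have hplus : Integrable (fun x => |f (x + v) - f x|) μ := ((hf.comp_add_right v).sub hf).abs
  have hminus : Integrable (fun x => |f (x - v) - f x|) μ := ((hf.comp_sub_right v).sub hf).abs
  rw [← integral_add hplus hminus]
  refine integral_mono_of_nonneg (ae_of_all _ fun x => abs_nonneg _) (hplus.add hminus)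
    (ae_of_all _ fun x => ?_)
  rcases hσ x with h | h <;>
    simp only [h, le_add_iff_nonneg_right, le_add_iff_nonneg_left, abs_nonneg]

section Flip

variable {X : Type*} [MeasurableSpace X] {μ : Measure X} {σ : X → X}

theorem MeasureTheory.MeasurePreserving.abs_integral_mul_sub_integral_mul_comp_le
    (hσ : MeasurePreserving σ μ μ) {f φ : X → ℝ} (hf : Integrable f μ)
    (hφ : AEStronglyMeasurable φ μ) (hφ₁ : ∀ x, |φ x| ≤ 1) :
    |∫ x, f x * φ x ∂μ - ∫ x, f x * φ (σ x) ∂μ| ≤ ∫ x, |f (σ x) - f x| ∂μ := by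
  have hφσ : AEStronglyMeasurable (fun x => φ (σ x)) μ := hφ.comp_measurePreserving hσ
  have hφσ₁ : ∀ᵐ x ∂μ, ‖φ (σ x)‖ ≤ 1 := ae_of_all _ fun x => hφ₁ (σ x)
  have hfσ : Integrable (fun x => f (σ x)) μ :=
    (hσ.integrable_comp hf.aestronglyMeasurable).mpr hf
  have hchange : ∫ x, f x * φ x ∂μ = ∫ x, f (σ x) * φ (σ x) ∂μ := by
    have h := integral_map (μ := μ) hσ.measurable.aemeasurable (f := fun x => f x * φ x)
      (by rw [hσ.map_eq]; exact hf.aestronglyMeasurable.mul hφ)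
    rwa [hσ.map_eq] at h
  calc |∫ x, f x * φ x ∂μ - ∫ x, f x * φ (σ x) ∂μ|
      = |∫ x, (f (σ x) - f x) * φ (σ x) ∂μ| := by
        rw [hchange, ← integral_sub (hfσ.mul_bdd hφσ hφσ₁) (hf.mul_bdd hφσ hφσ₁)]
        simp_rw [sub_mul]
    _ ≤ ∫ x, |(f (σ x) - f x) * φ (σ x)| ∂μ := abs_integral_le_integral_abs
    _ ≤ ∫ x, |f (σ x) - f x| ∂μ := by
        refine integral_mono_of_nonneg (ae_of_all _ fun x => abs_nonneg _) (hfσ.sub hf).abs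
          (ae_of_all _ fun x => ?_)
        simpa [abs_mul] using mul_le_of_le_one_right (abs_nonneg (f (σ x) - f x)) (hφ₁ (σ x))

variable {ι : Type*} [DecidableEq ι] {σ : ι → X → X} {g : ι → X → ℝ}

/-- Since `σ i` swaps `g i` with `1 - g i` and fixes the other `g j`, each factor `g i` halves
the integral up to an error `∫ |f ∘ σ i - f|`. -/
theorem abs_integral_mul_prod_sub_le (hσ : ∀ i, MeasurePreserving (σ i) μ μ)
    (hg : ∀ i, AEStronglyMeasurable (g i) μ) (hg₀ : ∀ i x, 0 ≤ g i x) (hg₁ : ∀ i x, g i x ≤ 1)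
    (hflip : ∀ i, ∀ᵐ x ∂μ, g i (σ i x) = 1 - g i x)
    (hfix : ∀ i j, i ≠ j → ∀ x, g j (σ i x) = g j x)
    {f : X → ℝ} (hf : Integrable f μ) (S : Finset ι) :
    |∫ x, f x * ∏ i ∈ S, g i x ∂μ - (1 / 2) ^ S.card * ∫ x, f x ∂μ| ≤
      ∑ i ∈ S, ∫ x, |f (σ i x) - f x| ∂μ := by
  induction S using Finset.induction_on with
  | empty => simp
  | @insert i S hiS ih =>
    set P : X → ℝ := fun x => ∏ j ∈ S, g j x
    have hP : AEStronglyMeasurable P μ := by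
      simpa [P, Finset.prod_fn] using Finset.aestronglyMeasurable_prod S fun j _ => hg j
    have hP₀ : ∀ x, 0 ≤ P x := fun x => Finset.prod_nonneg fun j _ => hg₀ j x
    have hP₁ : ∀ x, P x ≤ 1 := fun x =>
      Finset.prod_le_one (fun j _ => hg₀ j x) fun j _ => hg₁ j x
    have hφ₁ : ∀ x, |P x * g i x| ≤ 1 := fun x => by
      rw [abs_of_nonneg (mul_nonneg (hP₀ x) (hg₀ i x))]
      exact mul_le_one₀ (hP₁ x) (hg₀ i x) (hg₁ i x)
    have hPσ : ∀ x, P (σ i x) = P x := fun x =>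
      Finset.prod_congr rfl fun j hj => hfix i j (fun h => hiS (h ▸ hj)) x
    have hPi : Integrable (fun x => f x * P x) μ :=
      hf.mul_bdd hP (ae_of_all _ fun x => by simpa [abs_of_nonneg (hP₀ x)] using hP₁ x)
    have hPgi : Integrable (fun x => f x * (P x * g i x)) μ :=
      hf.mul_bdd (hP.mul (hg i)) (ae_of_all _ hφ₁)
    have hcomp : ∫ x, f x * (P (σ i x) * g i (σ i x)) ∂μ =
        ∫ x, f x * P x ∂μ - ∫ x, f x * (P x * g i x) ∂μ := by
      rw [← integral_sub hPi hPgi]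
      refine integral_congr_ae ((hflip i).mono fun x hx => ?_)
      simp only [hPσ, hx]
      ring
    have hstep := (hσ i).abs_integral_mul_sub_integral_mul_comp_le hf
      (φ := fun x => P x * g i x) (hP.mul (hg i)) hφ₁
    rw [hcomp] at hstep
    rw [Finset.sum_insert hiS, Finset.card_insert_of_notMem hiS, pow_succ]
    simp only [Finset.prod_insert hiS, mul_comm (g i _)]
    have hD : 0 ≤ ∫ x, |f (σ i x) - f x| ∂μ := integral_nonneg fun x => abs_nonneg _
    rw [abs_le] at hstep ih ⊢
    constructor <;> linarith [hstep.1, hstep.2, ih.1, ih.2]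

end Flip

theorem MeasureTheory.toReal_withDensity_ofReal_apply {X : Type*} [MeasurableSpace X]
    {μ : Measure X} {f : X → ℝ} (hf : Integrable f μ) (hf₀ : ∀ x, 0 ≤ f x) {E : Set X}
    (hE : MeasurableSet E) :
    (μ.withDensity (fun x => ENNReal.ofReal (f x)) E).toReal = ∫ x in E, f x ∂μ := by
  rw [withDensity_apply _ hE, ← ofReal_integral_eq_lintegral_ofReal hf.integrableOn
    (ae_of_all _ hf₀), ENNReal.toReal_ofReal (setIntegral_nonneg hE fun x _ => hf₀ x)]

section Cells

variable {m : ℕ}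

/-- The `j`-th of the `2m` cells `[j / (2m), (j + 1) / (2m)]` is one of the green intervals. -/
def IsGreenCell (b : Fin m → Bool) (j : ℤ) : Prop :=
  ∃ k : Fin m, j = 2 * k + (if b k then 1 else 0)

-- Adjacent cells share their endpoints, hence the restriction to points off the grid.
theorem mem_greenSet_iff_isGreenCell (hm : 0 < m) (b : Fin m → Bool) {u : ℝ}
    (hu : 2 * m * u ∉ range ((↑) : ℤ → ℝ)) :
    u ∈ greenSet m b ↔ IsGreenCell b ⌊2 * m * u⌋ := by
  have hN : (0 : ℝ) < 2 * m := by positivity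
  simp only [greenSet, greenInterval, mem_iUnion, mem_Icc, IsGreenCell]
  refine exists_congr fun k => ?_
  rw [Int.floor_eq_iff_of_notMem_range hu, div_le_iff₀ hN, le_div_iff₀ hN]
  push_cast
  rw [mul_comm u]

theorem isGreenCell_iff_not_isGreenCell (b : Fin m → Bool) {j j' : ℤ} (hj₀ : 0 ≤ j)
    (hjm : j < 2 * m) (hdiv : j' / 2 = j / 2) (hmod : j' % 2 ≠ j % 2) :
    IsGreenCell b j' ↔ ¬ IsGreenCell b j := by
  constructor
  · rintro ⟨k', hk'⟩ ⟨k, hk⟩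
    have hkk : k' = k := Fin.ext <| by
      have : (k' : ℤ) = k := by
        cases hb : b k <;> cases hb' : b k' <;>
          simp only [hb, hb', Bool.false_eq_true, ↓reduceIte] at hk hk' <;> omega
      exact_mod_cast this
    subst hkk
    cases hb : b k' <;> simp only [hb, Bool.false_eq_true, ↓reduceIte] at hk hk' <;> omega
  · intro h
    set k : Fin m := ⟨(j / 2).toNat, by omega⟩
    have hk : (k : ℤ) = j / 2 := by simp [k]; omega
    refine ⟨k, ?_⟩
    by_contra hne
    apply h
    refine ⟨k, ?_⟩
    cases hb : b k <;> simp only [hb] at hne ⊢ <;> omega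

end Cells

section CellFlip

variable {m : ℕ}

def evenCells (m : ℕ) : Set ℝ := {t | Even ⌊2 * m * t⌋}

open Classical in
noncomputable def cellFlip (m : ℕ) : ℝ → ℝ :=
  (evenCells m).piecewise (· + (2 * (m : ℝ))⁻¹) (· - (2 * (m : ℝ))⁻¹)

theorem add_inv_mem_evenCells_iff (hm : 0 < m) (t : ℝ) :
    t + (2 * (m : ℝ))⁻¹ ∈ evenCells m ↔ t ∉ evenCells m := by
  have hN : (2 * m : ℝ) ≠ 0 := by positivity
  have h : 2 * m * (t + (2 * (m : ℝ))⁻¹) = 2 * m * t + ((1 : ℤ) : ℝ) := by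
    field_simp; push_cast; ring
  simp only [evenCells, mem_ofPred_eq, h, Int.floor_add_intCast, Int.even_add_one]

theorem fract_cellFlip_mem_greenSet_iff (hm : 0 < m) (b : Fin m → Bool) {t : ℝ}
    (ht : 2 * m * t ∉ range ((↑) : ℤ → ℝ)) :
    Int.fract (cellFlip m t) ∈ greenSet m b ↔ Int.fract t ∉ greenSet m b := by
  have hN : (0 : ℝ) < 2 * m := by positivity
  set u := Int.fract t
  set j := ⌊2 * m * u⌋
  have htu : 2 * m * t = 2 * m * u + ((2 * m * ⌊t⌋ : ℤ) : ℝ) := by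
    simp only [u, Int.fract]; push_cast; ring
  have hu : 2 * m * u ∉ range ((↑) : ℤ → ℝ) := by
    rintro ⟨z, hz⟩
    exact ht ⟨z + 2 * m * ⌊t⌋, by rw [htu, ← hz]; push_cast; ring⟩
  have hj₀ : 0 ≤ j := Int.floor_nonneg.mpr (by positivity [Int.fract_nonneg t])
  have hjm : j < 2 * m := by
    rw [Int.floor_lt]; push_cast; nlinarith [Int.fract_lt_one t]
  have hjlt : (j : ℝ) < 2 * m * u := (Int.floor_le _).lt_of_ne fun h => hu ⟨j, h⟩
  have hju : 2 * m * u < j + 1 := Int.lt_floor_add_one _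
  -- `cellFlip` moves cell `j` to the other cell `j + e` of its pair
  set e : ℤ := if Even j then 1 else -1
  have he : 0 ≤ j + e ∧ j + e < 2 * m ∧ (j + e) / 2 = j / 2 ∧ (j + e) % 2 ≠ j % 2 := by
    by_cases hj : Even j <;> simp only [e, hj, if_true, if_false] <;>
      rw [Int.even_iff] at hj <;> omega
  have hflip : cellFlip m t = t + e / (2 * m) := by
    have hpar : t ∈ evenCells m ↔ Even j := by
      simp only [evenCells, mem_ofPred_eq, htu, Int.floor_add_intCast, Int.even_add, j]
      simp [parity_simps]
    by_cases hj : Even j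
    · simp [cellFlip, e, hj, hpar.mpr hj, div_eq_mul_inv]
    · simp [cellFlip, e, hj, mt hpar.mp hj, div_eq_mul_inv, sub_eq_add_neg]
  have hNe : 2 * m * (u + e / (2 * m)) = 2 * m * u + e := by field_simp
  have hfract : Int.fract (t + e / (2 * m)) = u + e / (2 * m) := by
    have h₀ : (0 : ℝ) ≤ j + e := by exact_mod_cast he.1
    have h₁ : (j + e : ℝ) + 1 ≤ 2 * m := by exact_mod_cast he.2.1
    refine Int.fract_eq_iff.mpr ⟨?_, ?_, ⌊t⌋, by simp only [u, Int.fract]; ring⟩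
    · nlinarith
    · nlinarith
  have hoff : 2 * m * (u + e / (2 * m)) ∉ range ((↑) : ℤ → ℝ) := by
    rw [hNe]
    rintro ⟨z, hz⟩
    exact hu ⟨z - e, by push_cast; linarith⟩
  rw [hflip, hfract, mem_greenSet_iff_isGreenCell hm b hoff, mem_greenSet_iff_isGreenCell hm b hu,
    hNe, Int.floor_add_intCast]
  exact isGreenCell_iff_not_isGreenCell b hj₀ hjm he.2.2.1 he.2.2.2

end CellFlip

def greenSide (m : ℕ) (b : Fin m → Bool) (c : Bool) : Set ℝ :=
  {t | Int.fract t ∈ greenSet m b ↔ c = true}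

theorem measurableSet_greenSide (m : ℕ) (b : Fin m → Bool) (c : Bool) :
    MeasurableSet (greenSide m b c) := by
  have hG : MeasurableSet (Int.fract ⁻¹' greenSet m b) :=
    measurable_fract (MeasurableSet.iUnion fun _ => measurableSet_Icc)
  cases c
  · simpa [greenSide, Set.preimage, Set.compl_def] using hG.compl
  · simpa [greenSide, Set.preimage] using hG

theorem cellFlip_mem_greenSide_iff {m : ℕ} (hm : 0 < m) (b : Fin m → Bool) (c : Bool) {t : ℝ}
    (ht : 2 * m * t ∉ range ((↑) : ℤ → ℝ)) :
    cellFlip m t ∈ greenSide m b c ↔ t ∉ greenSide m b c := by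
  simp only [greenSide, mem_ofPred_eq, fract_cellFlip_mem_greenSet_iff hm b ht]
  tauto

theorem ae_notMem_range_intCast_mul {ι : Type*} [Fintype ι] {m : ℕ} (hm : 0 < m) (i : ι) :
    ∀ᵐ x : ι → ℝ, 2 * m * x i ∉ range ((↑) : ℤ → ℝ) := by
  have hN : (2 * m : ℝ) ≠ 0 := by positivity
  have h : ∀ᵐ t : ℝ, 2 * m * t ∉ range ((↑) : ℤ → ℝ) := by
    refine ((Set.countable_range fun z : ℤ => (z : ℝ) / (2 * m)).ae_notMem _).mono fun t ht => ?_
    rintro ⟨z, hz⟩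
    exact ht ⟨z, show (z : ℝ) / (2 * m) = t by rw [hz]; field_simp⟩
  exact (Measure.tendsto_eval_ae_ae (μ := fun _ : ι => (volume : Measure ℝ))).eventually h

section CoordFlip

variable {ι : Type*} [DecidableEq ι] {m : ℕ}

open Classical in
noncomputable def coordFlip (m : ℕ) (i : ι) : (ι → ℝ) → ι → ℝ :=
  (Function.eval i ⁻¹' evenCells m).piecewise
    (· + Pi.single i (2 * (m : ℝ))⁻¹) (· - Pi.single i (2 * (m : ℝ))⁻¹)

theorem coordFlip_eq_add_or_eq_sub (m : ℕ) (i : ι) (x : ι → ℝ) :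
    coordFlip m i x = x + Pi.single i (2 * (m : ℝ))⁻¹ ∨
      coordFlip m i x = x - Pi.single i (2 * (m : ℝ))⁻¹ := by
  by_cases hx : x i ∈ evenCells m <;> simp [coordFlip, hx]

theorem coordFlip_apply_self (m : ℕ) (i : ι) (x : ι → ℝ) :
    coordFlip m i x i = cellFlip m (x i) := by
  by_cases hx : x i ∈ evenCells m <;> simp [coordFlip, cellFlip, hx]

theorem coordFlip_apply_of_ne (m : ℕ) {i j : ι} (hij : i ≠ j) (x : ι → ℝ) :
    coordFlip m i x j = x j := by
  by_cases hx : x i ∈ evenCells m <;> simp [coordFlip, hx, Pi.single_eq_of_ne' hij]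

theorem measurePreserving_coordFlip [Fintype ι] (hm : 0 < m) (i : ι) :
    MeasurePreserving (coordFlip m i) (volume : Measure (ι → ℝ)) volume := by
  classical
  refine measurePreserving_piecewise_add_sub (volume : Measure (ι → ℝ)) ?_ fun x => ?_
  · exact (measurable_const.mul (measurable_pi_apply i)).floor MeasurableSet.of_discrete
  · simpa using add_inv_mem_evenCells_iff hm (x i)

theorem tendsto_integral_abs_comp_coordFlip_sub [Fintype ι] {f : (ι → ℝ) → ℝ} (hf : Integrable f)
    (i : ι) : Tendsto (fun m : ℕ => ∫ x, |f (coordFlip m i x) - f x|) atTop (𝓝 0) := by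
  set v : ℕ → ι → ℝ := fun m => Pi.single i (2 * (m : ℝ))⁻¹
  have hv : Tendsto v atTop (𝓝 0) :=
    ((continuous_single i).tendsto' 0 0 (Pi.single_zero i)).comp <|
      tendsto_inv_atTop_zero.comp (tendsto_natCast_atTop_atTop.const_mul_atTop two_pos)
  have hbound : ∀ m, ∫ x, |f (coordFlip m i x) - f x| ≤
      (∫ x, |f (x + v m) - f x|) + ∫ x, |f (x + -v m) - f x| := fun m => by
    simpa only [← sub_eq_add_neg] using
      integral_abs_comp_sub_le_of_forall_eq_add_or_eq_sub (coordFlip_eq_add_or_eq_sub m i) hf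
  have hT := hf.tendsto_integral_abs_comp_add_sub (μ := volume)
  have hsum := (hT.comp hv).add (hT.comp (by simpa using hv.neg))
  rw [add_zero] at hsum
  exact squeeze_zero (fun m => integral_nonneg fun x => abs_nonneg _) hbound
    (by simpa only [Function.comp_def] using hsum)

end CoordFlip

section GreenPattern

variable {ι : Type*} [Fintype ι] {m : ℕ}

theorem measurableSet_greenPattern (m : ℕ) (b : Fin m → Bool) (s : ι → Bool) :
    MeasurableSet {x : ι → ℝ | ∀ i, (Int.fract (x i) ∈ greenSet m b ↔ s i = true)} := by
  rw [Set.ofPred_forall]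
  exact MeasurableSet.iInter fun i =>
    (measurableSet_greenSide m b (s i)).preimage (measurable_pi_apply i)

theorem abs_setIntegral_greenPattern_sub_le [DecidableEq ι] (hm : 0 < m) (b : Fin m → Bool)
    (s : ι → Bool) {f : (ι → ℝ) → ℝ} (hf : Integrable f) :
    |(∫ x in {x : ι → ℝ | ∀ i, (Int.fract (x i) ∈ greenSet m b ↔ s i = true)}, f x) -
        (1 / 2) ^ Fintype.card ι * ∫ x, f x| ≤ ∑ i, ∫ x, |f (coordFlip m i x) - f x| := by
  set g : ι → (ι → ℝ) → ℝ := fun i => (Function.eval i ⁻¹' greenSide m b (s i)).indicator 1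
  have hprod : ∫ x in {x : ι → ℝ | ∀ i, (Int.fract (x i) ∈ greenSet m b ↔ s i = true)}, f x =
      ∫ x, f x * ∏ i, g i x := by
    rw [← integral_indicator (measurableSet_greenPattern m b s)]
    refine integral_congr_ae (ae_of_all _ fun x => ?_)
    simp only [g, prod_indicator_const_apply]
    by_cases hx : ∀ i, (Int.fract (x i) ∈ greenSet m b ↔ s i = true) <;>
      simp [hx, greenSide]
  have hflip : ∀ i, ∀ᵐ x : ι → ℝ, g i (coordFlip m i x) = 1 - g i x := fun i =>
    (ae_notMem_range_intCast_mul hm i).mono fun x hx => by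
      have h := cellFlip_mem_greenSide_iff hm b (s i) hx
      by_cases hxi : x i ∈ greenSide m b (s i) <;> simp [g, coordFlip_apply_self, h, hxi]
  have hfix : ∀ i j, i ≠ j → ∀ x, g j (coordFlip m i x) = g j x := fun i j hij x => by
    classical
    simp [g, indicator_apply, coordFlip_apply_of_ne m hij]
  rw [hprod]
  simpa using abs_integral_mul_prod_sub_le (μ := volume) (measurePreserving_coordFlip hm)
    (fun i => (measurable_one.indicator (measurable_pi_apply i
      (measurableSet_greenSide m b (s i)))).aestronglyMeasurable)
    (fun i x => indicator_nonneg (fun _ _ => zero_le_one) x)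
    (fun i x => indicator_le_self' (fun _ _ => zero_le_one) x |>.trans_eq rfl)
    hflip hfix hf Finset.univ

end GreenPattern

theorem asymptotic_independence_general (p : ℕ)
    (f : (Fin p → ℝ) → ℝ) (hf_nonneg : ∀ x, 0 ≤ f x)
    (hf_int : ∫ x, f x = 1)
    (b : ∀ m : ℕ, Fin m → Bool) (s : Fin p → Bool) :
    Tendsto (fun m : ℕ =>
      (((volume : Measure (Fin p → ℝ)).withDensity fun x => ENNReal.ofReal (f x))
        {x : Fin p → ℝ | ∀ i, (Int.fract (x i) ∈ greenSet m (b m) ↔ s i = true)}).toReal)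
      atTop (nhds ((1 / 2 : ℝ) ^ p)) := by
  have hf : Integrable f := Integrable.of_integral_ne_zero (by simp [hf_int])
  have hlim : Tendsto (fun m => ∑ i, ∫ x, |f (coordFlip m i x) - f x|) atTop (𝓝 0) := by
    simpa using tendsto_finsetSum Finset.univ fun i _ =>
      tendsto_integral_abs_comp_coordFlip_sub hf i
  rw [tendsto_iff_norm_sub_tendsto_zero]
  refine squeeze_zero' (Eventually.of_forall fun m => norm_nonneg _) ?_ hlim
  filter_upwards [eventually_gt_atTop 0] with m hm
  rw [Real.norm_eq_abs, toReal_withDensity_ofReal_apply hf hf_nonneg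
    (measurableSet_greenPattern m (b m) s)]
  simpa [hf_int] using abs_setIntegral_greenPattern_sub_le hm (b m) s hf

/-- **Asymptotic independence (general case).** For a `p`-dimensional
distribution with continuous density (not necessarily compactly supported), the
probability that each coordinate's fractional part lies in (`s i = true`) or outside
(`s i = false`) the green list converges to `(1/2)^p` as `m → ∞`, for any choice sequence
of green lists. -/
theorem asymptotic_independence (p : ℕ)
    (f : (Fin p → ℝ) → ℝ) (hf_cont : Continuous f) (hf_nonneg : ∀ x, 0 ≤ f x)
    (hf_int : ∫ x, f x = 1)
    (b : ∀ m : ℕ, Fin m → Bool) (s : Fin p → Bool) :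
    Tendsto (fun m : ℕ =>
      (((volume : Measure (Fin p → ℝ)).withDensity fun x => ENNReal.ofReal (f x))
        {x : Fin p → ℝ | ∀ i, (Int.fract (x i) ∈ greenSet m (b m) ↔ s i = true)}).toReal)
      atTop (nhds ((1 / 2 : ℝ) ^ p)) :=
  asymptotic_independence_general p f hf_nonneg hf_int b s
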